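/- arXiv:1111.1469 — 3 statements merged into one kernel-verified Lean document; each statement's English description precedes it below -/
import Mathlib

section
/- Let X be a connected topological space with a measure μ that is positive on nonempty open sets, and let ψ₁, ψ₂ : X → ℝ be continuous. Suppose the complement of the zero set of ψ₁·ψ₂ is connected and nonempty. Then ∫ ψ₁ ψ₂ dμ ≠ 0 provided ψ₁ψ₂ is integrable. (Hence ψ₁ and ψ₂ cannot be orthogonal in L².) -/
/-!
On the connected open set where `ψ₁ ψ₂ ≠ 0`, the intermediate value theorem forces `ψ₁ ψ₂` to
have constant sign, so the integral is `± ∫ |ψ₁ ψ₂| dμ`, which is nonzero because the support is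
a nonempty open set and hence has positive measure.
-/

open MeasureTheory Function

theorem IsPreconnected.nonneg_or_nonpos_of_support {X : Type*} [TopologicalSpace X]
    {f : X → ℝ} (hs : IsPreconnected (support f)) (hf : ContinuousOn f (support f)) :
    0 ≤ f ∨ f ≤ 0 := by
  rw [or_iff_not_imp_left]
  intro hf_nonneg x
  obtain ⟨a, ha⟩ : ∃ a, f a < 0 := by simpa [Pi.le_def] using hf_nonneg
  by_contra! hx
  obtain ⟨y, hy, hy0⟩ := hs.intermediate_value ha.ne hx.ne' hf ⟨ha.le, hx.le⟩
  exact hy hy0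

theorem integral_ne_zero_of_nonneg_or_nonpos {α : Type*} [MeasurableSpace α] {μ : Measure α}
    {f : α → ℝ} (hsign : 0 ≤ f ∨ f ≤ 0) (hfi : Integrable f μ) (hμ : 0 < μ (support f)) :
    ∫ x, f x ∂μ ≠ 0 := by
  rcases hsign with hf | hf
  · exact ((integral_pos_iff_support_of_nonneg hf hfi).2 hμ).ne'
  · have hneg : 0 < ∫ x, -f x ∂μ :=
      (integral_pos_iff_support_of_nonneg (neg_nonneg.2 hf) hfi.neg).2 (by rwa [support_neg])
    rw [integral_neg] at hneg
    exact (neg_pos.1 hneg).ne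

theorem stmt2_general {X : Type*} [TopologicalSpace X] [MeasurableSpace X]
    (μ : Measure X)
    (hμ : ∀ U : Set X, IsOpen U → U.Nonempty → 0 < μ U)
    (ψ₁ ψ₂ : X → ℝ) (h₁ : Continuous ψ₁) (h₂ : Continuous ψ₂)
    (hconn : IsConnected {x : X | ψ₁ x * ψ₂ x ≠ 0})
    (hint : Integrable (fun x => ψ₁ x * ψ₂ x) μ) :
    ∫ x, ψ₁ x * ψ₂ x ∂μ ≠ 0 := by
  have hf : Continuous fun x => ψ₁ x * ψ₂ x := h₁.mul h₂
  exact integral_ne_zero_of_nonneg_or_nonpos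
    (hconn.isPreconnected.nonneg_or_nonpos_of_support hf.continuousOn) hint
    (hμ _ hf.isOpen_support hconn.nonempty)

theorem stmt2 {X : Type*} [TopologicalSpace X] [ConnectedSpace X] [MeasurableSpace X]
    [BorelSpace X] (μ : Measure X)
    (hμ : ∀ U : Set X, IsOpen U → U.Nonempty → 0 < μ U)
    (ψ₁ ψ₂ : X → ℝ) (h₁ : Continuous ψ₁) (h₂ : Continuous ψ₂)
    (hconn : IsConnected {x : X | ψ₁ x * ψ₂ x ≠ 0})
    (hint : Integrable (fun x => ψ₁ x * ψ₂ x) μ) :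
    ∫ x, ψ₁ x * ψ₂ x ∂μ ≠ 0 :=
  stmt2_general μ hμ ψ₁ ψ₂ h₁ h₂ hconn hint
end

section
/- Let X be a connected topological space with a measure μ positive on nonempty open sets, and let T be a symmetric linear operator on a subspace of real L²(X, μ) in the sense that ⟨T f, g⟩ = ⟨f, T g⟩ for all f, g in its domain. Suppose ψ₁ and ψ₂ are continuous eigenfunctions of T with distinct eigenvalues λ₁ ≠ λ₂, ψ₁ψ₂ is integrable, and the complement of the zero set of ψ₁·ψ₂ is connected and nonempty. Then a contradiction follows; i.e., such a configuration is impossible. -/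
/-!
Symmetry of `T` gives `l₁ ∫ ψ₁ψ₂ = ∫ (Tψ₁)ψ₂ = ∫ ψ₁(Tψ₂) = l₂ ∫ ψ₁ψ₂`, so `∫ ψ₁ψ₂ = 0`.
On the other hand, a continuous function whose support is connected cannot change sign
(intermediate value theorem), and its support is open, hence of positive measure; so its
integral is nonzero as soon as the support is nonempty.
-/

open MeasureTheory

theorem nonneg_or_nonpos_of_isPreconnected_support {X : Type*} [TopologicalSpace X]
    {f : X → ℝ} (hf : Continuous f) (hsupp : IsPreconnected (Function.support f)) :
    0 ≤ f ∨ f ≤ 0 := by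
  by_contra! h
  simp only [Pi.le_def, Pi.zero_apply, not_forall, not_le] at h
  obtain ⟨⟨a, ha⟩, ⟨b, hb⟩⟩ := h
  obtain ⟨y, hy_supp, hy⟩ :=
    hsupp.intermediate_value ha.ne hb.ne' hf.continuousOn ⟨ha.le, hb.le⟩
  exact hy_supp hy

theorem integral_ne_zero_of_isConnected_support {X : Type*} [TopologicalSpace X]
    [MeasurableSpace X] [BorelSpace X] {μ : Measure X} [μ.IsOpenPosMeasure] {f : X → ℝ}
    (hf : Continuous f) (hfi : Integrable f μ) (hsupp : IsConnected (Function.support f)) :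
    ∫ x, f x ∂μ ≠ 0 := by
  obtain ⟨x, hx⟩ := hsupp.nonempty
  rcases nonneg_or_nonpos_of_isPreconnected_support hf hsupp.isPreconnected with hpos | hneg
  · exact (integral_pos_of_integrable_nonneg_nonzero hf hfi hpos hx).ne'
  · have hneg_pos := integral_pos_of_integrable_nonneg_nonzero (μ := μ) hf.neg hfi.neg
      (neg_nonneg.mpr hneg) (neg_ne_zero.mpr hx)
    rw [integral_neg'] at hneg_pos
    exact (neg_pos.mp hneg_pos).ne

theorem integral_mul_eq_zero_of_eigenvalue_ne {X : Type*} [MeasurableSpace X] {μ : Measure X}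
    {D : Submodule ℝ (X → ℝ)} {T : D →ₗ[ℝ] X → ℝ}
    (hsymm : ∀ f g : D, ∫ x, T f x * (g : X → ℝ) x ∂μ = ∫ x, (f : X → ℝ) x * T g x ∂μ)
    {ψ₁ ψ₂ : D} {l₁ l₂ : ℝ} (hne : l₁ ≠ l₂)
    (he₁ : T ψ₁ = l₁ • (ψ₁ : X → ℝ)) (he₂ : T ψ₂ = l₂ • (ψ₂ : X → ℝ)) :
    ∫ x, (ψ₁ : X → ℝ) x * (ψ₂ : X → ℝ) x ∂μ = 0 := by
  have h := hsymm ψ₁ ψ₂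
  simp only [he₁, he₂, Pi.smul_apply, smul_eq_mul, mul_assoc, mul_left_comm _ l₂,
    integral_const_mul] at h
  exact (mul_eq_mul_right_iff.mp h).resolve_left hne

theorem stmt4_general {X : Type*} [TopologicalSpace X] [MeasurableSpace X]
    [BorelSpace X] (μ : Measure X)
    (hμ : ∀ U : Set X, IsOpen U → U.Nonempty → 0 < μ U)
    (D : Submodule ℝ (X → ℝ)) (T : D →ₗ[ℝ] X → ℝ)
    (hsymm : ∀ f g : D, ∫ x, T f x * (g : X → ℝ) x ∂μ = ∫ x, (f : X → ℝ) x * T g x ∂μ)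
    (ψ₁ ψ₂ : D) (l₁ l₂ : ℝ) (hne : l₁ ≠ l₂)
    (h₁c : Continuous (ψ₁ : X → ℝ)) (h₂c : Continuous (ψ₂ : X → ℝ))
    (he₁ : T ψ₁ = l₁ • (ψ₁ : X → ℝ)) (he₂ : T ψ₂ = l₂ • (ψ₂ : X → ℝ))
    (hint : Integrable (fun x => (ψ₁ : X → ℝ) x * (ψ₂ : X → ℝ) x) μ)
    (hconn : IsConnected {x : X | (ψ₁ : X → ℝ) x * (ψ₂ : X → ℝ) x ≠ 0}) :
    False := by
  have : μ.IsOpenPosMeasure := ⟨fun U hU hne => (hμ U hU hne).ne'⟩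
  exact integral_ne_zero_of_isConnected_support (h₁c.mul h₂c) hint hconn
    (integral_mul_eq_zero_of_eigenvalue_ne hsymm hne he₁ he₂)

theorem stmt4 {X : Type*} [TopologicalSpace X] [ConnectedSpace X] [MeasurableSpace X]
    [BorelSpace X] (μ : Measure X)
    (hμ : ∀ U : Set X, IsOpen U → U.Nonempty → 0 < μ U)
    (D : Submodule ℝ (X → ℝ)) (T : D →ₗ[ℝ] X → ℝ)
    (hsymm : ∀ f g : D, ∫ x, T f x * (g : X → ℝ) x ∂μ = ∫ x, (f : X → ℝ) x * T g x ∂μ)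
    (ψ₁ ψ₂ : D) (l₁ l₂ : ℝ) (hne : l₁ ≠ l₂)
    (h₁c : Continuous (ψ₁ : X → ℝ)) (h₂c : Continuous (ψ₂ : X → ℝ))
    (he₁ : T ψ₁ = l₁ • (ψ₁ : X → ℝ)) (he₂ : T ψ₂ = l₂ • (ψ₂ : X → ℝ))
    (hint : Integrable (fun x => (ψ₁ : X → ℝ) x * (ψ₂ : X → ℝ) x) μ)
    (hconn : IsConnected {x : X | (ψ₁ : X → ℝ) x * (ψ₂ : X → ℝ) x ≠ 0}) :
    False :=
  stmt4_general μ hμ D T hsymm ψ₁ ψ₂ l₁ l₂ hne h₁c h₂c he₁ he₂ hint hconn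
end

section
/- Let X be a connected topological space with measure μ positive on nonempty open sets. There do not exist two continuous functions ψ₁, ψ₂ : X → ℝ, each not identically zero, such that ψ₁ψ₂ is integrable with ∫ ψ₁ ψ₂ dμ = 0, and the complement of the zero set of ψ₁·ψ₂ is connected and nonempty. -/
/-! A continuous function whose non-vanishing locus is connected cannot change sign (intermediate
value theorem), so `±ψ₁ψ₂` is a nonnegative continuous function with zero integral. For a measure
charging every nonempty open set this forces `ψ₁ψ₂ ≡ 0`, contradicting the nonemptiness of
`{ψ₁ψ₂ ≠ 0}`. -/

open MeasureTheory

theorem nonneg_or_nonpos_of_isPreconnected_ne_zero {X α : Type*} [TopologicalSpace X]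
    [LinearOrder α] [Zero α] [TopologicalSpace α] [OrderClosedTopology α] {f : X → α}
    (hf : Continuous f) (hconn : IsPreconnected {x | f x ≠ 0}) :
    (∀ x, 0 ≤ f x) ∨ (∀ x, f x ≤ 0) := by
  by_contra! h
  obtain ⟨⟨a, hfa⟩, ⟨b, hfb⟩⟩ := h
  obtain ⟨c, hc, hfc⟩ := hconn.intermediate_value hfa.ne hfb.ne' hf.continuousOn
    ⟨hfa.le, hfb.le⟩
  exact hc hfc

theorem Continuous.eq_zero_of_integral_eq_zero_of_nonneg {X : Type*} [TopologicalSpace X]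
    [MeasurableSpace X] {μ : Measure X} [μ.IsOpenPosMeasure] {f : X → ℝ} (hf : Continuous f)
    (hfi : Integrable f μ) (hnn : ∀ x, 0 ≤ f x) (hzero : ∫ x, f x ∂μ = 0) : f = 0 :=
  (hf.ae_eq_iff_eq μ continuous_const).mp ((integral_eq_zero_iff_of_nonneg hnn hfi).mp hzero)

theorem stmt8_general {X : Type*} [TopologicalSpace X] [MeasurableSpace X]
    (μ : Measure X)
    (hμ : ∀ U : Set X, IsOpen U → U.Nonempty → 0 < μ U) :
    ¬ ∃ ψ₁ ψ₂ : X → ℝ, Continuous ψ₁ ∧ Continuous ψ₂ ∧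
      (∃ x, ψ₁ x ≠ 0) ∧ (∃ x, ψ₂ x ≠ 0) ∧
      Integrable (fun x => ψ₁ x * ψ₂ x) μ ∧
      (∫ x, ψ₁ x * ψ₂ x ∂μ) = 0 ∧
      IsConnected {x : X | ψ₁ x * ψ₂ x ≠ 0} := by
  rintro ⟨ψ₁, ψ₂, h₁, h₂, -, -, hint, hzero, hconn⟩
  have : μ.IsOpenPosMeasure := ⟨fun U hU hne => (hμ U hU hne).ne'⟩
  have hcont : Continuous fun x => ψ₁ x * ψ₂ x := h₁.mul h₂
  have hvanish : (fun x => ψ₁ x * ψ₂ x) = 0 := by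
    rcases nonneg_or_nonpos_of_isPreconnected_ne_zero hcont hconn.isPreconnected with hnn | hnp
    · exact hcont.eq_zero_of_integral_eq_zero_of_nonneg hint hnn hzero
    · have hneg := hcont.neg.eq_zero_of_integral_eq_zero_of_nonneg hint.neg
        (fun x => neg_nonneg.mpr (hnp x)) (by simp only [Pi.neg_apply, integral_neg, hzero, neg_zero])
      exact neg_eq_zero.mp hneg
  obtain ⟨x, hx⟩ := hconn.nonempty
  exact hx (congrFun hvanish x)

theorem stmt8 {X : Type*} [TopologicalSpace X] [ConnectedSpace X] [MeasurableSpace X]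
    [BorelSpace X] (μ : Measure X)
    (hμ : ∀ U : Set X, IsOpen U → U.Nonempty → 0 < μ U) :
    ¬ ∃ ψ₁ ψ₂ : X → ℝ, Continuous ψ₁ ∧ Continuous ψ₂ ∧
      (∃ x, ψ₁ x ≠ 0) ∧ (∃ x, ψ₂ x ≠ 0) ∧
      Integrable (fun x => ψ₁ x * ψ₂ x) μ ∧
      (∫ x, ψ₁ x * ψ₂ x ∂μ) = 0 ∧
      IsConnected {x : X | ψ₁ x * ψ₂ x ≠ 0} :=
  stmt8_general μ hμ
end
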